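/- arXiv:1008.1399 — 2 statements merged into one kernel-verified Lean document; each statement's English description precedes it below -/
import Mathlib

section
/- Let C and D be separable Frobenius monoids in a monoidal category V. Let X be a right C-comodule with coaction δᵣ : X ⟶ X ⊗ C, let Y be a (C, D)-bicomodule with left C-coaction λ_Y : Y ⟶ C ⊗ Y and right D-coaction ρ_Y : Y ⟶ Y ⊗ D which commute with each other, and let Z be a left D-comodule with coaction λ_Z : Z ⟶ D ⊗ Z. On X ⊗ Y ⊗ Z define the idempotents a₁ := a_{X,Y} ⊗ 1_Z and a₂ := 1_X ⊗ a_{Y,Z}, where a_{X,Y} := (1 ⊗ ε_C ⊗ 1) ∘ (1 ⊗ μ_C ⊗ 1) ∘ (δᵣ ⊗ λ_Y) and a_{Y,Z} := (1 ⊗ ε_D ⊗ 1) ∘ (1 ⊗ μ_D ⊗ 1) ∘ (ρ_Y ⊗ λ_Z) (associators suppressed). Then a₁ ∘ a₂ = a₂ ∘ a₁, the composite d := a₁ ∘ a₂ is idempotent, and for every splitting of d (p : X ⊗ Y ⊗ Z ⟶ W, i : W ⟶ X ⊗ Y ⊗ Z with i ∘ p = d, p ∘ i = 1_W): the morphism i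 equalizes both parallel pairs (δᵣ ⊗ 1_Y ⊗ 1_Z, 1_X ⊗ λ_Y ⊗ 1_Z) and (1_X ⊗ ρ_Y ⊗ 1_Z, 1_X ⊗ 1_Y ⊗ λ_Z), and any morphism h : V ⟶ X ⊗ Y ⊗ Z equalizing both pairs factors uniquely through i. (This computes the threefold cotensor product X ⊗_C Y ⊗_D Z as the splitting of the idempotent d.) -/
/-!
Over a separable Frobenius monoid `C`, a left comodule `(Y, λ)` is a left module through
`φ = (ε ⊗ 1) ∘ (μ ⊗ 1) ∘ (1 ⊗ λ)`, and separability makes `λ` a section of `φ`; dually for right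
comodules. Thus `a_{X,Y} = (1 ⊗ φ) ∘ (δᵣ ⊗ 1)` with `(1 ⊗ φ) ∘ (1 ⊗ λ) = 1`, and the Frobenius law
shows that `a_{X,Y}` equalizes `δᵣ ⊗ 1` and `1 ⊗ λ`: this is a split equalizer up to splitting
`a_{X,Y}`, a structure preserved by tensoring and by conjugation with associators. On a
bicomodule the induced `C`- and `D`-actions commute, hence so do `a₁` and `a₂`. A morphism is then
fixed by `a₂ ∘ a₁` iff it is fixed by both, i.e. iff it equalizes both pairs, so a splitting of
`a₂ ∘ a₁` is their joint equalizer.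
-/

open CategoryTheory MonoidalCategory CategoryTheory.Limits

/-- A separable Frobenius monoid in a monoidal category `V`. -/
structure SeparableFrobenius (V : Type*) [Category V] [MonoidalCategory V] where
  C : V
  mul : C ⊗ C ⟶ C
  one : 𝟙_ V ⟶ C
  comul : C ⟶ C ⊗ C
  counit : C ⟶ 𝟙_ V
  mul_assoc : (mul ▷ C) ≫ mul = (α_ C C C).hom ≫ (C ◁ mul) ≫ mul
  one_mul : (one ▷ C) ≫ mul = (λ_ C).hom
  mul_one : (C ◁ one) ≫ mul = (ρ_ C).hom
  comul_coassoc : comul ≫ (C ◁ comul) = comul ≫ (comul ▷ C) ≫ (α_ C C C).hom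
  counit_comul : comul ≫ (counit ▷ C) = (λ_ C).inv
  comul_counit : comul ≫ (C ◁ counit) = (ρ_ C).inv
  frobenius₁ : (comul ▷ C) ≫ (α_ C C C).hom ≫ (C ◁ mul) = mul ≫ comul
  frobenius₂ : (C ◁ comul) ≫ (α_ C C C).inv ≫ (mul ▷ C) = mul ≫ comul
  separable : comul ≫ mul = 𝟙 C

namespace CategoryTheory

variable {C : Type*} [Category C]

/-- Splitting `e` as `r ≫ ι` with `ι ≫ r = 𝟙` makes `ι` a split equalizer of `f` and `g`
(`CategoryTheory.IsSplitEqualizer`), with `s` as right retraction. -/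
structure IsSplitEqualizerIdempotent {T U : C} (f g : T ⟶ U) (e : T ⟶ T) (s : U ⟶ T) : Prop where
  condition : e ≫ f = e ≫ g
  bottom_retraction : g ≫ s = 𝟙 T
  top_retraction : f ≫ s = e

namespace IsSplitEqualizerIdempotent

variable {T U : C} {f g : T ⟶ U} {e : T ⟶ T} {s : U ⟶ T}

theorem map {D : Type*} [Category D] (h : IsSplitEqualizerIdempotent f g e s) (F : C ⥤ D) :
    IsSplitEqualizerIdempotent (F.map f) (F.map g) (F.map e) (F.map s) where
  condition := by rw [← F.map_comp, h.condition, F.map_comp]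
  bottom_retraction := by rw [← F.map_comp, h.bottom_retraction, F.map_id]
  top_retraction := by rw [← F.map_comp, h.top_retraction]

theorem conj (h : IsSplitEqualizerIdempotent f g e s) {T' U' : C} (φ : T' ≅ T) (ψ : U' ≅ U) :
    IsSplitEqualizerIdempotent (φ.hom ≫ f ≫ ψ.inv) (φ.hom ≫ g ≫ ψ.inv) (φ.hom ≫ e ≫ φ.inv)
      (ψ.hom ≫ s ≫ φ.inv) where
  condition := by simp [reassoc_of% h.condition]
  bottom_retraction := by simp [reassoc_of% h.bottom_retraction]
  top_retraction := by simp [reassoc_of% h.top_retraction]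

theorem comp_eq_self_iff (h : IsSplitEqualizerIdempotent f g e s) {W : C} (k : W ⟶ T) :
    k ≫ e = k ↔ k ≫ f = k ≫ g where
  mp hk := by rw [← hk, Category.assoc, Category.assoc, h.condition]
  mpr hk := by rw [← h.top_retraction, reassoc_of% hk, h.bottom_retraction, Category.comp_id]

theorem idem (h : IsSplitEqualizerIdempotent f g e s) : e ≫ e = e :=
  (h.comp_eq_self_iff e).2 h.condition

end IsSplitEqualizerIdempotent

section Idempotents

variable {T : C} {e₁ e₂ : T ⟶ T}

theorem comp_eq_self_iff_of_commute (h₁ : e₁ ≫ e₁ = e₁) (h₂ : e₂ ≫ e₂ = e₂)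
    (hc : e₁ ≫ e₂ = e₂ ≫ e₁) {W : C} (k : W ⟶ T) :
    k ≫ e₂ ≫ e₁ = k ↔ k ≫ e₁ = k ∧ k ≫ e₂ = k := by
  refine ⟨fun hk => ⟨?_, ?_⟩, fun ⟨hk₁, hk₂⟩ => by rw [reassoc_of% hk₂, hk₁]⟩
  · rw [← hk, Category.assoc, Category.assoc, h₁]
  · rw [← hk, Category.assoc, Category.assoc, hc, reassoc_of% h₂]

theorem comp_idem_of_commute (h₁ : e₁ ≫ e₁ = e₁) (h₂ : e₂ ≫ e₂ = e₂)
    (hc : e₁ ≫ e₂ = e₂ ≫ e₁) : (e₂ ≫ e₁) ≫ e₂ ≫ e₁ = e₂ ≫ e₁ :=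
  (comp_eq_self_iff_of_commute h₁ h₂ hc _).2
    ⟨by rw [Category.assoc, h₁], by rw [Category.assoc, hc, reassoc_of% h₂]⟩

end Idempotents

theorem existsUnique_lift_of_comp_eq_self {T W V : C} {d : T ⟶ T} {p : T ⟶ W} {i : W ⟶ T}
    (hpi : p ≫ i = d) (hip : i ≫ p = 𝟙 W) {k : V ⟶ T} (hk : k ≫ d = k) :
    ∃! l : V ⟶ W, l ≫ i = k := by
  refine ⟨k ≫ p, ?_, fun l hl => ?_⟩
  · simp only [Category.assoc, hpi, hk]
  · rw [← hl, Category.assoc, hip, Category.comp_id]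

theorem IsSplitEqualizerIdempotent.splitting_of_commute {T U U' : C} {f₁ f₂ : T ⟶ U}
    {g₁ g₂ : T ⟶ U'} {e₁ e₂ : T ⟶ T} {s₁ : U ⟶ T} {s₂ : U' ⟶ T}
    (h₁ : IsSplitEqualizerIdempotent f₁ f₂ e₁ s₁) (h₂ : IsSplitEqualizerIdempotent g₁ g₂ e₂ s₂)
    (hc : e₁ ≫ e₂ = e₂ ≫ e₁) :
    (e₂ ≫ e₁) ≫ e₂ ≫ e₁ = e₂ ≫ e₁ ∧
    ∀ (W : C) (p : T ⟶ W) (i : W ⟶ T), p ≫ i = e₂ ≫ e₁ → i ≫ p = 𝟙 W →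
      (i ≫ f₁ = i ≫ f₂) ∧ (i ≫ g₁ = i ≫ g₂) ∧
      ∀ (V : C) (k : V ⟶ T), k ≫ f₁ = k ≫ f₂ → k ≫ g₁ = k ≫ g₂ →
        ∃! l : V ⟶ W, l ≫ i = k := by
  have hd {V : C} (k : V ⟶ T) : k ≫ e₂ ≫ e₁ = k ↔ k ≫ f₁ = k ≫ f₂ ∧ k ≫ g₁ = k ≫ g₂ := by
    rw [comp_eq_self_iff_of_commute h₁.idem h₂.idem hc, h₁.comp_eq_self_iff,
      h₂.comp_eq_self_iff]
  refine ⟨comp_idem_of_commute h₁.idem h₂.idem hc, fun W p i hpi hip => ?_⟩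
  obtain ⟨hf, hg⟩ := (hd i).1 (by rw [← hpi, reassoc_of% hip])
  exact ⟨hf, hg, fun V k hf hg => existsUnique_lift_of_comp_eq_self hpi hip ((hd k).2 ⟨hf, hg⟩)⟩

end CategoryTheory

namespace SeparableFrobenius

variable {V : Type*} [Category V] [MonoidalCategory V]

section Comodule

variable (F : SeparableFrobenius V)

theorem frobenius₁_counit :
    (F.comul ▷ F.C) ≫ (α_ F.C F.C F.C).hom ≫ (F.C ◁ F.mul) ≫ (F.C ◁ F.counit) ≫
      (ρ_ F.C).hom = F.mul := by
  rw [reassoc_of% F.frobenius₁, reassoc_of% F.comul_counit]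
  simp

theorem frobenius₂_counit :
    (F.C ◁ F.comul) ≫ (α_ F.C F.C F.C).inv ≫ (F.mul ▷ F.C) ≫ (F.counit ▷ F.C) ≫
      (λ_ F.C).hom = F.mul := by
  rw [reassoc_of% F.frobenius₂, reassoc_of% F.counit_comul]
  simp

variable {X Y : V} (δr : X ⟶ X ⊗ F.C) (lY : Y ⟶ F.C ⊗ Y)

def cotensorIdem : X ⊗ Y ⟶ X ⊗ Y :=
  (δr ⊗ₘ lY) ≫ (α_ X F.C (F.C ⊗ Y)).hom ≫ (X ◁ (α_ F.C F.C Y).inv) ≫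
    (X ◁ (F.mul ▷ Y)) ≫ (X ◁ (F.counit ▷ Y)) ≫ (X ◁ (λ_ Y).hom)

def leftAction : F.C ⊗ Y ⟶ Y :=
  (F.C ◁ lY) ≫ (α_ F.C F.C Y).inv ≫ (F.mul ▷ Y) ≫ (F.counit ▷ Y) ≫ (λ_ Y).hom

def rightAction : X ⊗ F.C ⟶ X :=
  (δr ▷ F.C) ≫ (α_ X F.C F.C).hom ≫ (X ◁ F.mul) ≫ (X ◁ F.counit) ≫ (ρ_ X).hom

theorem cotensorIdem_eq_leftAction :
    F.cotensorIdem δr lY = (δr ▷ Y) ≫ (α_ X F.C Y).hom ≫ (X ◁ F.leftAction lY) := by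
  rw [cotensorIdem, leftAction, MonoidalCategory.tensorHom_def]
  monoidal

theorem cotensorIdem_eq_rightAction :
    F.cotensorIdem δr lY = (X ◁ lY) ≫ (α_ X F.C Y).inv ≫ (F.rightAction δr ▷ Y) := by
  rw [cotensorIdem, rightAction, MonoidalCategory.tensorHom_def']
  monoidal

variable {δr lY}

theorem coaction_leftAction
    (hYcoassoc : lY ≫ (F.C ◁ lY) = lY ≫ (F.comul ▷ Y) ≫ (α_ F.C F.C Y).hom)
    (hYcounit : lY ≫ (F.counit ▷ Y) = (λ_ Y).inv) :
    lY ≫ F.leftAction lY = 𝟙 Y := by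
  rw [leftAction, reassoc_of% hYcoassoc, Iso.hom_inv_id_assoc, ← comp_whiskerRight_assoc,
    F.separable, id_whiskerRight, Category.id_comp, reassoc_of% hYcounit]
  simp

theorem leftAction_coaction
    (hYcoassoc : lY ≫ (F.C ◁ lY) = lY ≫ (F.comul ▷ Y) ≫ (α_ F.C F.C Y).hom) :
    F.leftAction lY ≫ lY = (F.C ◁ lY) ≫ (α_ F.C F.C Y).inv ≫ (F.mul ▷ Y) := by
  rw [leftAction]
  slice_lhs 5 6 => rw [← leftUnitor_naturality]
  slice_lhs 4 5 => rw [← whisker_exchange]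
  slice_lhs 3 4 => rw [← whisker_exchange]
  have hcoassoc : (F.C ◁ lY) ≫ (α_ F.C F.C Y).inv ≫ ((F.C ⊗ F.C) ◁ lY)
      = (F.C ◁ (lY ≫ (F.C ◁ lY))) ≫ (α_ F.C F.C (F.C ⊗ Y)).inv := by
    monoidal
  slice_lhs 1 3 => rw [hcoassoc, hYcoassoc]
  calc _ = (F.C ◁ lY) ≫ (α_ F.C F.C Y).inv ≫
        (((F.C ◁ F.comul) ≫ (α_ F.C F.C F.C).inv ≫ (F.mul ▷ F.C) ≫ (F.counit ▷ F.C) ≫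
          (λ_ F.C).hom) ▷ Y) := by monoidal
    _ = _ := by rw [frobenius₂_counit]

theorem rightAction_coaction
    (hXcoassoc : δr ≫ (X ◁ F.comul) = δr ≫ (δr ▷ F.C) ≫ (α_ X F.C F.C).hom) :
    F.rightAction δr ≫ δr = (δr ▷ F.C) ≫ (α_ X F.C F.C).hom ≫ (X ◁ F.mul) := by
  rw [rightAction]
  slice_lhs 5 6 => rw [← rightUnitor_naturality]
  slice_lhs 4 5 => rw [whisker_exchange]
  slice_lhs 3 4 => rw [whisker_exchange]
  have hcoassoc : (δr ▷ F.C) ≫ (α_ X F.C F.C).hom ≫ (δr ▷ (F.C ⊗ F.C))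
      = ((δr ≫ (X ◁ F.comul)) ▷ F.C) ≫ ((α_ X F.C F.C).inv ▷ F.C) ≫
        (α_ (X ⊗ F.C) F.C F.C).hom := by
    rw [hXcoassoc]
    monoidal
  slice_lhs 1 3 => rw [hcoassoc]
  calc _ = (δr ▷ F.C) ≫ (α_ X F.C F.C).hom ≫
        (X ◁ ((F.comul ▷ F.C) ≫ (α_ F.C F.C F.C).hom ≫ (F.C ◁ F.mul) ≫ (F.C ◁ F.counit) ≫
          (ρ_ F.C).hom)) := by monoidal
    _ = _ := by rw [frobenius₁_counit]

theorem cotensorIdem_condition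
    (hXcoassoc : δr ≫ (X ◁ F.comul) = δr ≫ (δr ▷ F.C) ≫ (α_ X F.C F.C).hom)
    (hYcoassoc : lY ≫ (F.C ◁ lY) = lY ≫ (F.comul ▷ Y) ≫ (α_ F.C F.C Y).hom) :
    F.cotensorIdem δr lY ≫ (δr ▷ Y) ≫ (α_ X F.C Y).hom = F.cotensorIdem δr lY ≫ (X ◁ lY) := by
  conv_lhs => rw [cotensorIdem_eq_rightAction]
  conv_rhs => rw [cotensorIdem_eq_leftAction]
  simp only [Category.assoc]
  rw [← comp_whiskerRight_assoc, F.rightAction_coaction hXcoassoc, ← whiskerLeft_comp,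
    F.leftAction_coaction hYcoassoc]
  calc (X ◁ lY) ≫ (α_ X F.C Y).inv ≫
        (((δr ▷ F.C) ≫ (α_ X F.C F.C).hom ≫ (X ◁ F.mul)) ▷ Y) ≫ (α_ X F.C Y).hom
      = (X ◁ lY) ≫ (δr ▷ (F.C ⊗ Y)) ≫ (α_ X F.C (F.C ⊗ Y)).hom ≫
          (X ◁ (α_ F.C F.C Y).inv) ≫ (X ◁ (F.mul ▷ Y)) := by monoidal
    _ = (δr ▷ Y) ≫ ((X ⊗ F.C) ◁ lY) ≫ (α_ X F.C (F.C ⊗ Y)).hom ≫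
          (X ◁ (α_ F.C F.C Y).inv) ≫ (X ◁ (F.mul ▷ Y)) := by
        rw [whisker_exchange_assoc]
    _ = (δr ▷ Y) ≫ (α_ X F.C Y).hom ≫
          (X ◁ ((F.C ◁ lY) ≫ (α_ F.C F.C Y).inv ≫ (F.mul ▷ Y))) := by monoidal

theorem isSplitEqualizerIdempotent_cotensorIdem
    (hXcoassoc : δr ≫ (X ◁ F.comul) = δr ≫ (δr ▷ F.C) ≫ (α_ X F.C F.C).hom)
    (hYcoassoc : lY ≫ (F.C ◁ lY) = lY ≫ (F.comul ▷ Y) ≫ (α_ F.C F.C Y).hom)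
    (hYcounit : lY ≫ (F.counit ▷ Y) = (λ_ Y).inv) :
    IsSplitEqualizerIdempotent ((δr ▷ Y) ≫ (α_ X F.C Y).hom) (X ◁ lY) (F.cotensorIdem δr lY)
      (X ◁ F.leftAction lY) where
  condition := F.cotensorIdem_condition hXcoassoc hYcoassoc
  bottom_retraction := by rw [← whiskerLeft_comp, F.coaction_leftAction hYcoassoc hYcounit,
    whiskerLeft_id]
  top_retraction := by rw [Category.assoc, cotensorIdem_eq_leftAction]

theorem isSplitEqualizerIdempotent_cotensorIdem_whiskerRight
    (hXcoassoc : δr ≫ (X ◁ F.comul) = δr ≫ (δr ▷ F.C) ≫ (α_ X F.C F.C).hom)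
    (hYcoassoc : lY ≫ (F.C ◁ lY) = lY ≫ (F.comul ▷ Y) ≫ (α_ F.C F.C Y).hom)
    (hYcounit : lY ≫ (F.counit ▷ Y) = (λ_ Y).inv) (Z : V) :
    IsSplitEqualizerIdempotent (((δr ▷ Y) ≫ (α_ X F.C Y).hom) ▷ Z) ((X ◁ lY) ▷ Z)
      (F.cotensorIdem δr lY ▷ Z) ((X ◁ F.leftAction lY) ▷ Z) :=
  (F.isSplitEqualizerIdempotent_cotensorIdem hXcoassoc hYcoassoc hYcounit).map (tensorRight Z)

theorem isSplitEqualizerIdempotent_whiskerLeft_cotensorIdem {Z : V} {lZ : Z ⟶ F.C ⊗ Z}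
    {rY : Y ⟶ Y ⊗ F.C}
    (hYcoassoc : rY ≫ (Y ◁ F.comul) = rY ≫ (rY ▷ F.C) ≫ (α_ Y F.C F.C).hom)
    (hZcoassoc : lZ ≫ (F.C ◁ lZ) = lZ ≫ (F.comul ▷ Z) ≫ (α_ F.C F.C Z).hom)
    (hZcounit : lZ ≫ (F.counit ▷ Z) = (λ_ Z).inv) (X : V) :
    IsSplitEqualizerIdempotent (((X ◁ rY) ≫ (α_ X Y F.C).inv) ▷ Z)
      (((X ⊗ Y) ◁ lZ) ≫ (α_ (X ⊗ Y) F.C Z).inv)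
      ((α_ X Y Z).hom ≫ (X ◁ F.cotensorIdem rY lZ) ≫ (α_ X Y Z).inv)
      ((α_ (X ⊗ Y) F.C Z).hom ≫ (α_ X Y (F.C ⊗ Z)).hom ≫ (X ◁ Y ◁ F.leftAction lZ) ≫
        (α_ X Y Z).inv) := by
  convert ((F.isSplitEqualizerIdempotent_cotensorIdem hYcoassoc hZcoassoc hZcounit).map
    (tensorLeft X)).conj (α_ X Y Z) (α_ (X ⊗ Y) F.C Z ≪≫ α_ X Y (F.C ⊗ Z)) using 1 <;> simp

end Comodule

section Bicomodule

variable (FC FD : SeparableFrobenius V) {X Y Z : V} {lY : Y ⟶ FC.C ⊗ Y}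

theorem leftAction_rightCoaction {D : V} {rY : Y ⟶ Y ⊗ D}
    (hbicomod : lY ≫ (FC.C ◁ rY) = rY ≫ (lY ▷ D) ≫ (α_ FC.C Y D).hom) :
    FC.leftAction lY ≫ rY = (FC.C ◁ rY) ≫ (α_ FC.C Y D).inv ≫ (FC.leftAction lY ▷ D) := by
  rw [leftAction]
  slice_lhs 5 6 => rw [← leftUnitor_naturality]
  slice_lhs 4 5 => rw [← whisker_exchange]
  slice_lhs 3 4 => rw [← whisker_exchange]
  have hcomm : (FC.C ◁ lY) ≫ (α_ FC.C FC.C Y).inv ≫ ((FC.C ⊗ FC.C) ◁ rY)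
      = (FC.C ◁ (lY ≫ (FC.C ◁ rY))) ≫ (α_ FC.C FC.C (Y ⊗ D)).inv := by
    monoidal
  slice_lhs 1 3 => rw [hcomm, hbicomod]
  monoidal

variable {rY : Y ⟶ Y ⊗ FD.C}

theorem leftAction_rightAction_comm
    (hbicomod : lY ≫ (FC.C ◁ rY) = rY ≫ (lY ▷ FD.C) ≫ (α_ FC.C Y FD.C).hom) :
    (FC.leftAction lY ▷ FD.C) ≫ FD.rightAction rY
      = (α_ FC.C Y FD.C).hom ≫ (FC.C ◁ FD.rightAction rY) ≫ FC.leftAction lY := by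
  conv_lhs => rw [rightAction]
  rw [← comp_whiskerRight_assoc, FC.leftAction_rightCoaction hbicomod]
  calc _ = ((FC.C ◁ rY) ▷ FD.C) ≫ ((α_ FC.C Y FD.C).inv ▷ FD.C) ≫
        (α_ (FC.C ⊗ Y) FD.C FD.C).hom ≫ (FC.leftAction lY ▷ (FD.C ⊗ FD.C)) ≫
        (Y ◁ (FD.mul ≫ FD.counit)) ≫ (ρ_ Y).hom := by monoidal
    _ = ((FC.C ◁ rY) ▷ FD.C) ≫ ((α_ FC.C Y FD.C).inv ▷ FD.C) ≫
        (α_ (FC.C ⊗ Y) FD.C FD.C).hom ≫ ((FC.C ⊗ Y) ◁ (FD.mul ≫ FD.counit)) ≫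
        (ρ_ (FC.C ⊗ Y)).hom ≫ FC.leftAction lY := by
        rw [← whisker_exchange_assoc, rightUnitor_naturality]
    _ = _ := by rw [rightAction]; monoidal

theorem leftAction_whiskerRight_cotensorIdem {lZ : Z ⟶ FD.C ⊗ Z}
    (hbicomod : lY ≫ (FC.C ◁ rY) = rY ≫ (lY ▷ FD.C) ≫ (α_ FC.C Y FD.C).hom) :
    (FC.leftAction lY ▷ Z) ≫ FD.cotensorIdem rY lZ
      = (α_ FC.C Y Z).hom ≫ (FC.C ◁ FD.cotensorIdem rY lZ) ≫ (α_ FC.C Y Z).inv ≫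
        (FC.leftAction lY ▷ Z) := by
  rw [cotensorIdem_eq_rightAction]
  calc _ = ((FC.C ⊗ Y) ◁ lZ) ≫ (α_ (FC.C ⊗ Y) FD.C Z).inv ≫
        (((FC.leftAction lY ▷ FD.C) ≫ FD.rightAction rY) ▷ Z) := by
        rw [← whisker_exchange_assoc]; monoidal
    _ = _ := by rw [FC.leftAction_rightAction_comm FD hbicomod]; monoidal

theorem cotensorIdem_whiskerRight_commute {δr : X ⟶ X ⊗ FC.C} {lZ : Z ⟶ FD.C ⊗ Z}
    (hbicomod : lY ≫ (FC.C ◁ rY) = rY ≫ (lY ▷ FD.C) ≫ (α_ FC.C Y FD.C).hom) :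
    (FC.cotensorIdem δr lY ▷ Z) ≫ (α_ X Y Z).hom ≫ (X ◁ FD.cotensorIdem rY lZ) ≫
        (α_ X Y Z).inv
      = ((α_ X Y Z).hom ≫ (X ◁ FD.cotensorIdem rY lZ) ≫ (α_ X Y Z).inv) ≫
        (FC.cotensorIdem δr lY ▷ Z) := by
  calc _ = (((δr ▷ Y) ≫ (α_ X FC.C Y).hom) ▷ Z) ≫ (α_ X (FC.C ⊗ Y) Z).hom ≫
        (X ◁ ((FC.leftAction lY ▷ Z) ≫ FD.cotensorIdem rY lZ)) ≫ (α_ X Y Z).inv := by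
        rw [FC.cotensorIdem_eq_leftAction]; monoidal
    _ = (α_ X Y Z).hom ≫ (δr ▷ (Y ⊗ Z)) ≫ ((X ⊗ FC.C) ◁ FD.cotensorIdem rY lZ) ≫
        (α_ X FC.C (Y ⊗ Z)).hom ≫ (X ◁ (α_ FC.C Y Z).inv) ≫
        (X ◁ (FC.leftAction lY ▷ Z)) ≫ (α_ X Y Z).inv := by
        rw [FC.leftAction_whiskerRight_cotensorIdem FD hbicomod]; monoidal
    _ = _ := by rw [← whisker_exchange_assoc, FC.cotensorIdem_eq_leftAction]; monoidal

end Bicomodule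

end SeparableFrobenius

theorem threefold_cotensor_as_splitting_general
    {V : Type*} [Category V] [MonoidalCategory V]
    (FC FD : SeparableFrobenius V)
    (X : V) (δr : X ⟶ X ⊗ FC.C)
    (hXcoassoc : δr ≫ (X ◁ FC.comul) = δr ≫ (δr ▷ FC.C) ≫ (α_ X FC.C FC.C).hom)
    (Y : V) (lY : Y ⟶ FC.C ⊗ Y) (rY : Y ⟶ Y ⊗ FD.C)
    (hlYcoassoc : lY ≫ (FC.C ◁ lY) = lY ≫ (FC.comul ▷ Y) ≫ (α_ FC.C FC.C Y).hom)
    (hlYcounit : lY ≫ (FC.counit ▷ Y) = (λ_ Y).inv)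
    (hrYcoassoc : rY ≫ (Y ◁ FD.comul) = rY ≫ (rY ▷ FD.C) ≫ (α_ Y FD.C FD.C).hom)
    (hbicomod : lY ≫ (FC.C ◁ rY) = rY ≫ (lY ▷ FD.C) ≫ (α_ FC.C Y FD.C).hom)
    (Z : V) (lZ : Z ⟶ FD.C ⊗ Z)
    (hZcoassoc : lZ ≫ (FD.C ◁ lZ) = lZ ≫ (FD.comul ▷ Z) ≫ (α_ FD.C FD.C Z).hom)
    (hZcounit : lZ ≫ (FD.counit ▷ Z) = (λ_ Z).inv) :
    letI aXY : X ⊗ Y ⟶ X ⊗ Y :=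
      (δr ⊗ₘ lY) ≫ (α_ X FC.C (FC.C ⊗ Y)).hom ≫ (X ◁ (α_ FC.C FC.C Y).inv) ≫
        (X ◁ (FC.mul ▷ Y)) ≫ (X ◁ (FC.counit ▷ Y)) ≫ (X ◁ (λ_ Y).hom)
    letI aYZ : Y ⊗ Z ⟶ Y ⊗ Z :=
      (rY ⊗ₘ lZ) ≫ (α_ Y FD.C (FD.C ⊗ Z)).hom ≫ (Y ◁ (α_ FD.C FD.C Z).inv) ≫
        (Y ◁ (FD.mul ▷ Z)) ≫ (Y ◁ (FD.counit ▷ Z)) ≫ (Y ◁ (λ_ Z).hom)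
    letI a₁ : (X ⊗ Y) ⊗ Z ⟶ (X ⊗ Y) ⊗ Z := aXY ▷ Z
    letI a₂ : (X ⊗ Y) ⊗ Z ⟶ (X ⊗ Y) ⊗ Z :=
      (α_ X Y Z).hom ≫ (X ◁ aYZ) ≫ (α_ X Y Z).inv
    letI d : (X ⊗ Y) ⊗ Z ⟶ (X ⊗ Y) ⊗ Z := a₂ ≫ a₁
    letI f₁ : (X ⊗ Y) ⊗ Z ⟶ (X ⊗ (FC.C ⊗ Y)) ⊗ Z := ((δr ▷ Y) ≫ (α_ X FC.C Y).hom) ▷ Z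
    letI f₂ : (X ⊗ Y) ⊗ Z ⟶ (X ⊗ (FC.C ⊗ Y)) ⊗ Z := (X ◁ lY) ▷ Z
    letI g₁ : (X ⊗ Y) ⊗ Z ⟶ ((X ⊗ Y) ⊗ FD.C) ⊗ Z := ((X ◁ rY) ≫ (α_ X Y FD.C).inv) ▷ Z
    letI g₂ : (X ⊗ Y) ⊗ Z ⟶ ((X ⊗ Y) ⊗ FD.C) ⊗ Z :=
      ((X ⊗ Y) ◁ lZ) ≫ (α_ (X ⊗ Y) FD.C Z).inv
    (a₁ ≫ a₂ = a₂ ≫ a₁) ∧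
    (d ≫ d = d) ∧
    ∀ (W : V) (p : (X ⊗ Y) ⊗ Z ⟶ W) (i : W ⟶ (X ⊗ Y) ⊗ Z),
      p ≫ i = d → i ≫ p = 𝟙 W →
      (i ≫ f₁ = i ≫ f₂) ∧ (i ≫ g₁ = i ≫ g₂) ∧
      ∀ (V' : V) (h : V' ⟶ (X ⊗ Y) ⊗ Z),
        h ≫ f₁ = h ≫ f₂ → h ≫ g₁ = h ≫ g₂ →
        ∃! k : V' ⟶ W, k ≫ i = h := by
  have h₁ := FC.isSplitEqualizerIdempotent_cotensorIdem_whiskerRight hXcoassoc hlYcoassoc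
    hlYcounit Z
  have h₂ := FD.isSplitEqualizerIdempotent_whiskerLeft_cotensorIdem hrYcoassoc hZcoassoc
    hZcounit X
  have hc := FC.cotensorIdem_whiskerRight_commute FD (δr := δr) (lZ := lZ) hbicomod
  exact ⟨hc, h₁.splitting_of_commute h₂ hc⟩

set_option maxHeartbeats 1000000 in
/-- For separable Frobenius monoids `C`, `D`, a right `C`-comodule `X`,
a `(C, D)`-bicomodule `Y` and a left `D`-comodule `Z`, the cotensor idempotents
`a₁ = a_{X,Y} ⊗ 1` and `a₂ = 1 ⊗ a_{Y,Z}` on `(X ⊗ Y) ⊗ Z` commute, their composite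
`d = a₁ ∘ a₂` is idempotent, and any splitting `i : W ⟶ (X ⊗ Y) ⊗ Z` of `d` equalizes
both coaction pairs and is universal among morphisms doing so; thus it computes the
threefold cotensor product `X ⊗_C Y ⊗_D Z`. -/
theorem threefold_cotensor_as_splitting
    {V : Type*} [Category V] [MonoidalCategory V]
    (FC FD : SeparableFrobenius V)
    (X : V) (δr : X ⟶ X ⊗ FC.C)
    (hXcoassoc : δr ≫ (X ◁ FC.comul) = δr ≫ (δr ▷ FC.C) ≫ (α_ X FC.C FC.C).hom)
    (hXcounit : δr ≫ (X ◁ FC.counit) = (ρ_ X).inv)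
    (Y : V) (lY : Y ⟶ FC.C ⊗ Y) (rY : Y ⟶ Y ⊗ FD.C)
    (hlYcoassoc : lY ≫ (FC.C ◁ lY) = lY ≫ (FC.comul ▷ Y) ≫ (α_ FC.C FC.C Y).hom)
    (hlYcounit : lY ≫ (FC.counit ▷ Y) = (λ_ Y).inv)
    (hrYcoassoc : rY ≫ (Y ◁ FD.comul) = rY ≫ (rY ▷ FD.C) ≫ (α_ Y FD.C FD.C).hom)
    (hrYcounit : rY ≫ (Y ◁ FD.counit) = (ρ_ Y).inv)
    (hbicomod : lY ≫ (FC.C ◁ rY) = rY ≫ (lY ▷ FD.C) ≫ (α_ FC.C Y FD.C).hom)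
    (Z : V) (lZ : Z ⟶ FD.C ⊗ Z)
    (hZcoassoc : lZ ≫ (FD.C ◁ lZ) = lZ ≫ (FD.comul ▷ Z) ≫ (α_ FD.C FD.C Z).hom)
    (hZcounit : lZ ≫ (FD.counit ▷ Z) = (λ_ Z).inv) :
    letI aXY : X ⊗ Y ⟶ X ⊗ Y :=
      (δr ⊗ₘ lY) ≫ (α_ X FC.C (FC.C ⊗ Y)).hom ≫ (X ◁ (α_ FC.C FC.C Y).inv) ≫
        (X ◁ (FC.mul ▷ Y)) ≫ (X ◁ (FC.counit ▷ Y)) ≫ (X ◁ (λ_ Y).hom)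
    letI aYZ : Y ⊗ Z ⟶ Y ⊗ Z :=
      (rY ⊗ₘ lZ) ≫ (α_ Y FD.C (FD.C ⊗ Z)).hom ≫ (Y ◁ (α_ FD.C FD.C Z).inv) ≫
        (Y ◁ (FD.mul ▷ Z)) ≫ (Y ◁ (FD.counit ▷ Z)) ≫ (Y ◁ (λ_ Z).hom)
    letI a₁ : (X ⊗ Y) ⊗ Z ⟶ (X ⊗ Y) ⊗ Z := aXY ▷ Z
    letI a₂ : (X ⊗ Y) ⊗ Z ⟶ (X ⊗ Y) ⊗ Z :=
      (α_ X Y Z).hom ≫ (X ◁ aYZ) ≫ (α_ X Y Z).inv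
    letI d : (X ⊗ Y) ⊗ Z ⟶ (X ⊗ Y) ⊗ Z := a₂ ≫ a₁
    letI f₁ : (X ⊗ Y) ⊗ Z ⟶ (X ⊗ (FC.C ⊗ Y)) ⊗ Z := ((δr ▷ Y) ≫ (α_ X FC.C Y).hom) ▷ Z
    letI f₂ : (X ⊗ Y) ⊗ Z ⟶ (X ⊗ (FC.C ⊗ Y)) ⊗ Z := (X ◁ lY) ▷ Z
    letI g₁ : (X ⊗ Y) ⊗ Z ⟶ ((X ⊗ Y) ⊗ FD.C) ⊗ Z := ((X ◁ rY) ≫ (α_ X Y FD.C).inv) ▷ Z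
    letI g₂ : (X ⊗ Y) ⊗ Z ⟶ ((X ⊗ Y) ⊗ FD.C) ⊗ Z :=
      ((X ⊗ Y) ◁ lZ) ≫ (α_ (X ⊗ Y) FD.C Z).inv
    (a₁ ≫ a₂ = a₂ ≫ a₁) ∧
    (d ≫ d = d) ∧
    ∀ (W : V) (p : (X ⊗ Y) ⊗ Z ⟶ W) (i : W ⟶ (X ⊗ Y) ⊗ Z),
      p ≫ i = d → i ≫ p = 𝟙 W →
      (i ≫ f₁ = i ≫ f₂) ∧ (i ≫ g₁ = i ≫ g₂) ∧
      ∀ (V' : V) (h : V' ⟶ (X ⊗ Y) ⊗ Z),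
        h ≫ f₁ = h ≫ f₂ → h ≫ g₁ = h ≫ g₂ →
        ∃! k : V' ⟶ W, k ≫ i = h :=
  threefold_cotensor_as_splitting_general FC FD X δr hXcoassoc Y lY rY hlYcoassoc hlYcounit
    hrYcoassoc hbicomod Z lZ hZcoassoc hZcounit
end

section
/- Let C be a separable Frobenius monoid in a monoidal category V and let X be a right C-comodule such that the functor X ⊗ − : V ⟶ V preserves reflexive coequalizers. Let Y₁, Y₂, Y₃ be left C-comodules, let u, v : Y₁ ⟶ Y₂ be comodule morphisms admitting a common section s : Y₂ ⟶ Y₁ (a comodule morphism with u ∘ s = v ∘ s = 1_{Y₂}), and let q : Y₂ ⟶ Y₃ be a comodule morphism which is a coequalizer of (u, v) in V. For each j let a_j := (1_X ⊗ ε ⊗ 1) ∘ (1_X ⊗ μ ⊗ 1) ∘ (δᵣ ⊗ δₗ^{Y_j}) be the cotensor idempotent on X ⊗ Y_j, and suppose each a_j splits as a_j = i_j ∘ p_j with p_j ∘ i_j = 1 (so the splitting object is the cotensor product X ⊗_C Y_j). Then the induced morphism p₃ ∘ (1_X ⊗ q) ∘ i₂ : X ⊗_C Y₂ ⟶ X ⊗_C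 Y₃ is a coequalizer in V of the induced pair (p₂ ∘ (1_X ⊗ u) ∘ i₁, p₂ ∘ (1_X ⊗ v) ∘ i₁) : X ⊗_C Y₁ ⟶ X ⊗_C Y₂. In other words, the functor X ⊗_C − preserves reflexive coequalizers of left C-comodules. -/
/-!
The cotensor idempotents are natural with respect to comodule morphisms, so the diagram
`X ⊗_C Y₁ ⇉ X ⊗_C Y₂ → X ⊗_C Y₃` is a retract, through compatible split idempotents, of
`X ⊗ Y₁ ⇉ X ⊗ Y₂ → X ⊗ Y₃`, which is a coequalizer by assumption on `X ⊗ −`. Coequalizers are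
stable under such retracts.
-/

open CategoryTheory MonoidalCategory CategoryTheory.Limits

/-- A cocone under the split diagram extends along `pB` to a cocone under the original one;
the descended map, restricted along `iQ`, is the required factorization. -/
def isColimitCoforkOfSplitIdempotents {C : Type*} [Category C] {A B Q A' B' Q' : C}
    {f g : A ⟶ B} {π : B ⟶ Q} {hπ : f ≫ π = g ≫ π} (hc : IsColimit (Cofork.ofπ π hπ))
    (pA : A ⟶ A') (iA : A' ⟶ A) (pB : B ⟶ B') (iB : B' ⟶ B) (pQ : Q ⟶ Q') (iQ : Q' ⟶ Q)
    (hf : f ≫ pB ≫ iB = (pA ≫ iA) ≫ f) (hg : g ≫ pB ≫ iB = (pA ≫ iA) ≫ g)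
    (hπQ : π ≫ pQ ≫ iQ = (pB ≫ iB) ≫ π) (hB : iB ≫ pB = 𝟙 B') (hQ : iQ ≫ pQ = 𝟙 Q')
    (w : (iA ≫ f ≫ pB) ≫ (iB ≫ π ≫ pQ) = (iA ≫ g ≫ pB) ≫ (iB ≫ π ≫ pQ)) :
    IsColimit (Cofork.ofπ (iB ≫ π ≫ pQ) w) :=
  Cofork.IsColimit.mk' _ fun t => by
    have ht : f ≫ pB ≫ t.π = g ≫ pB ≫ t.π := by
      have h := pA ≫= t.condition
      simp only [← Category.assoc] at h
      simpa only [Category.assoc, ← reassoc_of% hf, ← reassoc_of% hg, reassoc_of% hB] using h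
    have hdesc : π ≫ Cofork.IsColimit.desc hc (pB ≫ t.π) ht = pB ≫ t.π :=
      Cofork.IsColimit.π_desc' hc _ ht
    have hπp : pB ≫ iB ≫ π ≫ pQ = π ≫ pQ := by
      rw [← reassoc_of% hπQ, hQ, Category.comp_id]
    refine ⟨iQ ≫ Cofork.IsColimit.desc hc (pB ≫ t.π) ht, ?_, fun {m} hm => ?_⟩
    · simp only [Cofork.π_ofπ, Category.assoc]
      rw [reassoc_of% hπQ, hdesc, reassoc_of% hB, reassoc_of% hB]
    · have hm' : pQ ≫ m = Cofork.IsColimit.desc hc (pB ≫ t.π) ht :=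
        Cofork.IsColimit.hom_ext hc <| by
          simp only [Cofork.π_ofπ] at hm ⊢
          rw [hdesc, ← reassoc_of% hπp, ← hm, Category.assoc, Category.assoc]
      rw [← hm', reassoc_of% hQ]

namespace SeparableFrobenius

variable {V : Type*} [Category V] [MonoidalCategory V] (F : SeparableFrobenius V)

/-- The idempotent whose splitting is the cotensor product `X ⊗_C Y`. -/
abbrev cotensorIdempotent {X Y : V} (δr : X ⟶ X ⊗ F.C) (δl : Y ⟶ F.C ⊗ Y) :
    X ⊗ Y ⟶ X ⊗ Y :=
  (δr ⊗ₘ δl) ≫ (α_ X F.C (F.C ⊗ Y)).hom ≫ (X ◁ (α_ F.C F.C Y).inv) ≫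
    (X ◁ (F.mul ▷ Y)) ≫ (X ◁ (F.counit ▷ Y)) ≫ (X ◁ (λ_ Y).hom)

theorem cotensorIdempotent_naturality {X Y Y' : V} (δr : X ⟶ X ⊗ F.C)
    {δl : Y ⟶ F.C ⊗ Y} {δl' : Y' ⟶ F.C ⊗ Y'} (f : Y ⟶ Y') (hf : f ≫ δl' = δl ≫ (F.C ◁ f)) :
    (X ◁ f) ≫ F.cotensorIdempotent δr δl' = F.cotensorIdempotent δr δl ≫ (X ◁ f) := by
  have hcoact : (X ◁ f) ≫ (δr ⊗ₘ δl') = (δr ⊗ₘ δl) ≫ ((X ⊗ F.C) ◁ (F.C ◁ f)) := by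
    rw [← id_tensorHom, ← id_tensorHom, tensorHom_comp_tensorHom, tensorHom_comp_tensorHom,
      Category.id_comp, Category.comp_id, hf]
  have hcontract : F.C ◁ (F.C ◁ f) ≫ (α_ F.C F.C Y').inv ≫ F.mul ▷ Y' ≫ F.counit ▷ Y' ≫
        (λ_ Y').hom = (α_ F.C F.C Y).inv ≫ F.mul ▷ Y ≫ F.counit ▷ Y ≫ (λ_ Y).hom ≫ f := by
    rw [associator_inv_naturality_right_assoc, whisker_exchange_assoc, whisker_exchange_assoc]
    simp
  rw [reassoc_of% hcoact]
  simp only [associator_naturality_right_assoc, ← MonoidalCategory.whiskerLeft_comp,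
    Category.assoc, hcontract]

end SeparableFrobenius

theorem cotensor_functor_preserves_reflexive_coequalizers_general
    {V : Type*} [Category V] [MonoidalCategory V] (F : SeparableFrobenius V)
    (X : V) (δr : X ⟶ X ⊗ F.C)
    -- `X ⊗ −` preserves reflexive coequalizers
    (hpres : ∀ (A B : V) (f g : A ⟶ B) (s : B ⟶ A), s ≫ f = 𝟙 B → s ≫ g = 𝟙 B →
      ∀ (Q : V) (π : B ⟶ Q) (hπ : f ≫ π = g ≫ π), IsColimit (Cofork.ofπ π hπ) →
        ∀ (w : (X ◁ f) ≫ (X ◁ π) = (X ◁ g) ≫ (X ◁ π)),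
          Nonempty (IsColimit (Cofork.ofπ (X ◁ π) w)))
    -- the left C-comodules Y₁, Y₂, Y₃
    (Y₁ Y₂ Y₃ : V) (δl₁ : Y₁ ⟶ F.C ⊗ Y₁) (δl₂ : Y₂ ⟶ F.C ⊗ Y₂) (δl₃ : Y₃ ⟶ F.C ⊗ Y₃)
    -- a reflexive pair of comodule morphisms with common section and its coequalizer
    (u v : Y₁ ⟶ Y₂) (s : Y₂ ⟶ Y₁) (q : Y₂ ⟶ Y₃)
    (hu : u ≫ δl₂ = δl₁ ≫ (F.C ◁ u)) (hv : v ≫ δl₂ = δl₁ ≫ (F.C ◁ v))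
    (hqc : q ≫ δl₃ = δl₂ ≫ (F.C ◁ q))
    (hsu : s ≫ u = 𝟙 Y₂) (hsv : s ≫ v = 𝟙 Y₂)
    (hq : u ≫ q = v ≫ q) (hcolim : IsColimit (Cofork.ofπ q hq)) :
    letI a₁ : X ⊗ Y₁ ⟶ X ⊗ Y₁ :=
      (δr ⊗ₘ δl₁) ≫ (α_ X F.C (F.C ⊗ Y₁)).hom ≫ (X ◁ (α_ F.C F.C Y₁).inv) ≫
        (X ◁ (F.mul ▷ Y₁)) ≫ (X ◁ (F.counit ▷ Y₁)) ≫ (X ◁ (λ_ Y₁).hom)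
    letI a₂ : X ⊗ Y₂ ⟶ X ⊗ Y₂ :=
      (δr ⊗ₘ δl₂) ≫ (α_ X F.C (F.C ⊗ Y₂)).hom ≫ (X ◁ (α_ F.C F.C Y₂).inv) ≫
        (X ◁ (F.mul ▷ Y₂)) ≫ (X ◁ (F.counit ▷ Y₂)) ≫ (X ◁ (λ_ Y₂).hom)
    letI a₃ : X ⊗ Y₃ ⟶ X ⊗ Y₃ :=
      (δr ⊗ₘ δl₃) ≫ (α_ X F.C (F.C ⊗ Y₃)).hom ≫ (X ◁ (α_ F.C F.C Y₃).inv) ≫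
        (X ◁ (F.mul ▷ Y₃)) ≫ (X ◁ (F.counit ▷ Y₃)) ≫ (X ◁ (λ_ Y₃).hom)
    ∀ (W₁ W₂ W₃ : V)
      (p₁ : X ⊗ Y₁ ⟶ W₁) (i₁ : W₁ ⟶ X ⊗ Y₁)
      (p₂ : X ⊗ Y₂ ⟶ W₂) (i₂ : W₂ ⟶ X ⊗ Y₂)
      (p₃ : X ⊗ Y₃ ⟶ W₃) (i₃ : W₃ ⟶ X ⊗ Y₃),
      p₁ ≫ i₁ = a₁ → i₁ ≫ p₁ = 𝟙 W₁ →
      p₂ ≫ i₂ = a₂ → i₂ ≫ p₂ = 𝟙 W₂ →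
      p₃ ≫ i₃ = a₃ → i₃ ≫ p₃ = 𝟙 W₃ →
      ∀ (w : (i₁ ≫ (X ◁ u) ≫ p₂) ≫ (i₂ ≫ (X ◁ q) ≫ p₃)
           = (i₁ ≫ (X ◁ v) ≫ p₂) ≫ (i₂ ≫ (X ◁ q) ≫ p₃)),
        Nonempty (IsColimit (Cofork.ofπ (i₂ ≫ (X ◁ q) ≫ p₃) w)) := by
  intro W₁ W₂ W₃ p₁ i₁ p₂ i₂ p₃ i₃ hpi₁ _ hpi₂ hip₂ hpi₃ hip₃ w
  have hXq : (X ◁ u) ≫ (X ◁ q) = (X ◁ v) ≫ (X ◁ q) := by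
    simp only [← MonoidalCategory.whiskerLeft_comp, hq]
  obtain ⟨hc⟩ := hpres Y₁ Y₂ u v s hsu hsv Y₃ q hq hcolim hXq
  refine ⟨isColimitCoforkOfSplitIdempotents hc p₁ i₁ p₂ i₂ p₃ i₃ ?_ ?_ ?_ hip₂ hip₃ w⟩
  · rw [hpi₁, hpi₂]; exact F.cotensorIdempotent_naturality δr u hu
  · rw [hpi₁, hpi₂]; exact F.cotensorIdempotent_naturality δr v hv
  · rw [hpi₂, hpi₃]; exact F.cotensorIdempotent_naturality δr q hqc

set_option maxHeartbeats 1000000 in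
/-- If `C` is a separable Frobenius monoid and `X` is a right `C`-comodule
such that `X ⊗ −` preserves reflexive coequalizers, then the functor `X ⊗_C −` (computed by
splitting the cotensor idempotents) preserves reflexive coequalizers of left `C`-comodules. -/
theorem cotensor_functor_preserves_reflexive_coequalizers
    {V : Type*} [Category V] [MonoidalCategory V] (F : SeparableFrobenius V)
    (X : V) (δr : X ⟶ X ⊗ F.C)
    (hXcoassoc : δr ≫ (X ◁ F.comul) = δr ≫ (δr ▷ F.C) ≫ (α_ X F.C F.C).hom)
    (hXcounit : δr ≫ (X ◁ F.counit) = (ρ_ X).inv)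
    -- `X ⊗ −` preserves reflexive coequalizers
    (hpres : ∀ (A B : V) (f g : A ⟶ B) (s : B ⟶ A), s ≫ f = 𝟙 B → s ≫ g = 𝟙 B →
      ∀ (Q : V) (π : B ⟶ Q) (hπ : f ≫ π = g ≫ π), IsColimit (Cofork.ofπ π hπ) →
        ∀ (w : (X ◁ f) ≫ (X ◁ π) = (X ◁ g) ≫ (X ◁ π)),
          Nonempty (IsColimit (Cofork.ofπ (X ◁ π) w)))
    -- the left C-comodules Y₁, Y₂, Y₃
    (Y₁ Y₂ Y₃ : V) (δl₁ : Y₁ ⟶ F.C ⊗ Y₁) (δl₂ : Y₂ ⟶ F.C ⊗ Y₂) (δl₃ : Y₃ ⟶ F.C ⊗ Y₃)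
    (hco₁ : δl₁ ≫ (F.C ◁ δl₁) = δl₁ ≫ (F.comul ▷ Y₁) ≫ (α_ F.C F.C Y₁).hom)
    (hcu₁ : δl₁ ≫ (F.counit ▷ Y₁) = (λ_ Y₁).inv)
    (hco₂ : δl₂ ≫ (F.C ◁ δl₂) = δl₂ ≫ (F.comul ▷ Y₂) ≫ (α_ F.C F.C Y₂).hom)
    (hcu₂ : δl₂ ≫ (F.counit ▷ Y₂) = (λ_ Y₂).inv)
    (hco₃ : δl₃ ≫ (F.C ◁ δl₃) = δl₃ ≫ (F.comul ▷ Y₃) ≫ (α_ F.C F.C Y₃).hom)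
    (hcu₃ : δl₃ ≫ (F.counit ▷ Y₃) = (λ_ Y₃).inv)
    -- a reflexive pair of comodule morphisms with common section and its coequalizer
    (u v : Y₁ ⟶ Y₂) (s : Y₂ ⟶ Y₁) (q : Y₂ ⟶ Y₃)
    (hu : u ≫ δl₂ = δl₁ ≫ (F.C ◁ u)) (hv : v ≫ δl₂ = δl₁ ≫ (F.C ◁ v))
    (hs : s ≫ δl₁ = δl₂ ≫ (F.C ◁ s)) (hqc : q ≫ δl₃ = δl₂ ≫ (F.C ◁ q))
    (hsu : s ≫ u = 𝟙 Y₂) (hsv : s ≫ v = 𝟙 Y₂)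
    (hq : u ≫ q = v ≫ q) (hcolim : IsColimit (Cofork.ofπ q hq)) :
    letI a₁ : X ⊗ Y₁ ⟶ X ⊗ Y₁ :=
      (δr ⊗ₘ δl₁) ≫ (α_ X F.C (F.C ⊗ Y₁)).hom ≫ (X ◁ (α_ F.C F.C Y₁).inv) ≫
        (X ◁ (F.mul ▷ Y₁)) ≫ (X ◁ (F.counit ▷ Y₁)) ≫ (X ◁ (λ_ Y₁).hom)
    letI a₂ : X ⊗ Y₂ ⟶ X ⊗ Y₂ :=
      (δr ⊗ₘ δl₂) ≫ (α_ X F.C (F.C ⊗ Y₂)).hom ≫ (X ◁ (α_ F.C F.C Y₂).inv) ≫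
        (X ◁ (F.mul ▷ Y₂)) ≫ (X ◁ (F.counit ▷ Y₂)) ≫ (X ◁ (λ_ Y₂).hom)
    letI a₃ : X ⊗ Y₃ ⟶ X ⊗ Y₃ :=
      (δr ⊗ₘ δl₃) ≫ (α_ X F.C (F.C ⊗ Y₃)).hom ≫ (X ◁ (α_ F.C F.C Y₃).inv) ≫
        (X ◁ (F.mul ▷ Y₃)) ≫ (X ◁ (F.counit ▷ Y₃)) ≫ (X ◁ (λ_ Y₃).hom)
    ∀ (W₁ W₂ W₃ : V)
      (p₁ : X ⊗ Y₁ ⟶ W₁) (i₁ : W₁ ⟶ X ⊗ Y₁)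
      (p₂ : X ⊗ Y₂ ⟶ W₂) (i₂ : W₂ ⟶ X ⊗ Y₂)
      (p₃ : X ⊗ Y₃ ⟶ W₃) (i₃ : W₃ ⟶ X ⊗ Y₃),
      p₁ ≫ i₁ = a₁ → i₁ ≫ p₁ = 𝟙 W₁ →
      p₂ ≫ i₂ = a₂ → i₂ ≫ p₂ = 𝟙 W₂ →
      p₃ ≫ i₃ = a₃ → i₃ ≫ p₃ = 𝟙 W₃ →
      ∀ (w : (i₁ ≫ (X ◁ u) ≫ p₂) ≫ (i₂ ≫ (X ◁ q) ≫ p₃)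
           = (i₁ ≫ (X ◁ v) ≫ p₂) ≫ (i₂ ≫ (X ◁ q) ≫ p₃)),
        Nonempty (IsColimit (Cofork.ofπ (i₂ ≫ (X ◁ q) ≫ p₃) w)) :=
  cotensor_functor_preserves_reflexive_coequalizers_general F X δr hpres Y₁ Y₂ Y₃ δl₁ δl₂ δl₃ u v s
    q hu hv hqc hsu hsv hq hcolim
end
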